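/- Reduction Lemma for the Tverberg–Vrećica setting: if the colored Tverberg–Vrećica conjecture holds for parameters (d, k, r_0, ..., r_k) with k ≥ 1, then it holds for parameters (d-1, k-1, r_0, ..., r_{k-1}). -/

import Mathlib

/-- The colored Tverberg–Vrećica statement for parameters `(d, k, r₀, …, r_k)`: for all
colored point sets `C^ℓ ⊂ ℝ^d` of cardinality `(r_ℓ-1)(d-k+1)+1` with color classes of
size `≤ r_ℓ - 1`, each `C^ℓ` can be partitioned into `r_ℓ` colorful sets such that some
`k`-dimensional affine plane meets all convex hulls of the pieces. -/
def ColoredTV (d k : ℕ) (r : Fin (k + 1) → ℕ) : Prop :=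
  letI : DecidableEq (EuclideanSpace ℝ (Fin d)) := Classical.decEq _
  ∀ (C : ∀ _ : Fin (k + 1), Finset (EuclideanSpace ℝ (Fin d)))
    (col : Fin (k + 1) → EuclideanSpace ℝ (Fin d) → ℕ),
    (∀ ℓ, (C ℓ).card = (r ℓ - 1) * (d - k + 1) + 1) →
    (∀ ℓ i, ((C ℓ).filter (fun x => col ℓ x = i)).card ≤ r ℓ - 1) →
    ∃ (F : ∀ ℓ : Fin (k + 1), Fin (r ℓ) → Finset (EuclideanSpace ℝ (Fin d)))
      (P : AffineSubspace ℝ (EuclideanSpace ℝ (Fin d))),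
      (P : Set (EuclideanSpace ℝ (Fin d))).Nonempty ∧
      Module.finrank ℝ P.direction = k ∧
      ∀ ℓ, (∀ j j', j ≠ j' → Disjoint (F ℓ j) (F ℓ j')) ∧
        (Finset.univ.biUnion (F ℓ) = C ℓ) ∧
        (∀ i j, ((F ℓ j).filter (fun x => col ℓ x = i)).card ≤ 1) ∧
        (∀ j, ((P : Set (EuclideanSpace ℝ (Fin d))) ∩
          convexHull ℝ ((F ℓ j : Set (EuclideanSpace ℝ (Fin d))))).Nonempty)

/-!
Embed `ℝ^{d-1}` in `ℝ^d` as the hyperplane `H = {x_d = 0}` and add the set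
`C^k = {(0, …, 0, m + 1) | m < (r_k - 1)(d - k + 1) + 1}`, colored by `⌊x_d⌋`, so that its
points have pairwise distinct colors and lie in the half-space `x_d ≥ 1`. Since `d - k` is
unchanged, the hypothesis applies and gives colorful partitions and a `k`-plane `P` meeting all
their convex hulls. The hulls of pieces of the old sets lie in `H`, those of pieces of `C^k` do not
meet `H`, so `P` meets `H` without lying in it. Pulling `P` and the pieces back along the embedding
therefore gives a `(k-1)`-plane and the required colorful partitions.
-/

open Module Function

section LinearAlgebra

open LinearMap

variable {K V E : Type*} [Field K] [AddCommGroup V] [Module K V] [AddCommGroup E] [Module K E]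

theorem Submodule.finrank_inf_ker_add_one [FiniteDimensional K E] {W : Submodule K E}
    {f : E →ₗ[K] K} {v : E} (hv : v ∈ W) (hfv : f v ≠ 0) :
    finrank K ↥(W ⊓ ker f) + 1 = finrank K W := by
  have hsurj : Surjective (f.domRestrict W) := fun t =>
    ⟨(t / f v) • ⟨v, hv⟩, by simp [hfv]⟩
  have hrank := (f.domRestrict W).finrank_range_add_finrank_ker
  rw [range_eq_top.2 hsurj, finrank_top, finrank_self, ker_domRestrict] at hrank
  rw [← hrank, add_comm, ← (Submodule.comapSubtypeEquivOfLe inf_le_left).finrank_eq,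
    Submodule.comap_inf, Submodule.comap_subtype_self, top_inf_eq]

theorem Submodule.finrank_comap_of_injective {L : V →ₗ[K] E} (hL : Injective L)
    (W : Submodule K E) : finrank K (W.comap L) = finrank K ↥(W ⊓ range L) := by
  rw [(Submodule.equivMapOfInjective L hL _).finrank_eq, Submodule.map_comap_eq, inf_comm]

theorem AffineSubspace.direction_comap_of_mem {L : V →ₗ[K] E} {P : AffineSubspace K E} {x : V}
    (hx : L x ∈ P) : (P.comap L.toAffineMap).direction = P.direction.comap L := by
  ext v
  rw [← AffineSubspace.vadd_mem_iff_mem_direction v (AffineSubspace.mem_comap.2 hx),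
    AffineSubspace.mem_comap, Submodule.mem_comap,
    ← AffineSubspace.vadd_mem_iff_mem_direction (L v) hx]
  simp

theorem AffineSubspace.finrank_direction_comap_add_one [FiniteDimensional K E]
    {L : V →ₗ[K] E} (hL : Injective L) {f : E →ₗ[K] K} (hLf : range L = ker f)
    {P : AffineSubspace K E} {x : V} (hx : L x ∈ P) {y : E} (hy : y ∈ P) (hfy : f y ≠ 0) :
    finrank K (P.comap L.toAffineMap).direction + 1 = finrank K P.direction := by
  have hfx : f (L x) = 0 := by rw [← mem_ker, ← hLf]; exact mem_range_self L x
  rw [direction_comap_of_mem hx, Submodule.finrank_comap_of_injective hL, hLf]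
  exact Submodule.finrank_inf_ker_add_one (vsub_mem_direction hy hx) (by simpa [hfx] using hfy)

end LinearAlgebra

theorem AffineSubspace.comap_inter_convexHull_preimage_nonempty {𝕜 V E : Type*} [Ring 𝕜]
    [PartialOrder 𝕜] [AddCommGroup V] [Module 𝕜 V] [AddCommGroup E] [Module 𝕜 E]
    {L : V →ₗ[𝕜] E} {P : AffineSubspace 𝕜 E} {S : Set E} (hS : S ⊆ Set.range L)
    (h : ((P : Set E) ∩ convexHull 𝕜 S).Nonempty) :
    ((P.comap L.toAffineMap : Set V) ∩ convexHull 𝕜 (L ⁻¹' S)).Nonempty := by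
  obtain ⟨w, hwP, hw⟩ := h
  rw [← Set.image_preimage_eq_of_subset hS, ← L.image_convexHull] at hw
  obtain ⟨u, hu, rfl⟩ := hw
  exact ⟨u, hwP, hu⟩

section ColorfulPartition

variable {α β ι : Type*} [DecidableEq α] [DecidableEq β] [Fintype ι]

def IsColorfulPartition (C : Finset α) (col : α → ℕ) (F : ι → Finset α) : Prop :=
  (∀ j j', j ≠ j' → Disjoint (F j) (F j')) ∧ Finset.univ.biUnion F = C ∧
    ∀ i j, ((F j).filter (fun x => col x = i)).card ≤ 1

theorem IsColorfulPartition.subset {C : Finset α} {col : α → ℕ} {F : ι → Finset α}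
    (h : IsColorfulPartition C col F) (j : ι) : F j ⊆ C :=
  h.2.1 ▸ Finset.subset_biUnion_of_mem F (Finset.mem_univ j)

theorem IsColorfulPartition.preimage {g : α → β} (hg : Injective g) {C : Finset α}
    {col : α → ℕ} {col' : β → ℕ} (hcol : ∀ x, col' (g x) = col x) {F : ι → Finset β}
    (h : IsColorfulPartition (C.image g) col' F) :
    IsColorfulPartition C col (fun j => (F j).preimage g hg.injOn) := by
  obtain ⟨hdisj, hcover, hcolorful⟩ := h
  refine ⟨fun j j' hjj' => ?_, ?_, fun i j => ?_⟩
  · simpa [← Finset.disjoint_coe] using (Finset.disjoint_coe.2 (hdisj j j' hjj')).preimage g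
  · ext x
    simpa [hg.eq_iff] using congrArg (g x ∈ ·) hcover
  · calc _ = (((F j).filter (fun y => col' y = i)).preimage g hg.injOn).card := by
          congr 1; ext x; simp [hcol]
      _ ≤ ((F j).filter (fun y => col' y = i)).card :=
          Finset.card_le_card_of_injOn g (fun x hx => Finset.mem_preimage.1 hx) hg.injOn
      _ ≤ 1 := hcolorful i j

end ColorfulPartition

noncomputable def appendZero (d : ℕ) :
    EuclideanSpace ℝ (Fin d) →ₗ[ℝ] EuclideanSpace ℝ (Fin (d + 1)) where
  toFun x := WithLp.toLp 2 (Fin.snoc (α := fun _ => ℝ) x.ofLp 0)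
  map_add' x y := by ext i; refine Fin.lastCases ?_ (fun i => ?_) i <;> simp
  map_smul' c x := by ext i; refine Fin.lastCases ?_ (fun i => ?_) i <;> simp

def dropLast {d : ℕ} (x : EuclideanSpace ℝ (Fin (d + 1))) : EuclideanSpace ℝ (Fin d) :=
  WithLp.toLp 2 (Fin.init x.ofLp)

section AppendZero

variable {d : ℕ}

@[simp]
theorem appendZero_apply_castSucc (x : EuclideanSpace ℝ (Fin d)) (i : Fin d) :
    appendZero d x i.castSucc = x i := by
  simp [appendZero]

@[simp]
theorem appendZero_apply_last (x : EuclideanSpace ℝ (Fin d)) :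
    appendZero d x (Fin.last d) = 0 := by
  simp [appendZero]

@[simp]
theorem dropLast_appendZero (x : EuclideanSpace ℝ (Fin d)) : dropLast (appendZero d x) = x := by
  ext i; simp [dropLast, Fin.init]

theorem appendZero_injective (d : ℕ) : Injective (appendZero d) :=
  LeftInverse.injective dropLast_appendZero

theorem range_appendZero (d : ℕ) :
    LinearMap.range (appendZero d) = LinearMap.ker (EuclideanSpace.projₗ (Fin.last d)) := by
  ext x
  refine ⟨?_, fun hx => ⟨dropLast x, ?_⟩⟩
  · rintro ⟨x, rfl⟩
    simp
  · ext i
    refine Fin.lastCases ?_ (fun i => ?_) i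
    · simpa using hx.symm
    · simp [dropLast, Fin.init]

end AppendZero

noncomputable def lastAxisPoint (d m : ℕ) : EuclideanSpace ℝ (Fin (d + 1)) :=
  EuclideanSpace.single (Fin.last d) ((m : ℝ) + 1)

@[simp]
theorem lastAxisPoint_apply_last (d m : ℕ) : lastAxisPoint d m (Fin.last d) = m + 1 := by
  simp [lastAxisPoint]

theorem lastAxisPoint_injective (d : ℕ) : Injective (lastAxisPoint d) := fun m m' h => by
  simpa using congrArg (· (Fin.last d)) h

section Lift

variable {d k : ℕ}

noncomputable def liftedSets (C : Fin (k + 1) → Finset (EuclideanSpace ℝ (Fin d))) (N : ℕ) :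
    Fin (k + 2) → Finset (EuclideanSpace ℝ (Fin (d + 1))) :=
  Fin.lastCases
    ((Finset.range N).image (lastAxisPoint d))
    (fun ℓ => (C ℓ).image (appendZero d))

noncomputable def liftedColoring (col : Fin (k + 1) → EuclideanSpace ℝ (Fin d) → ℕ) :
    Fin (k + 2) → EuclideanSpace ℝ (Fin (d + 1)) → ℕ :=
  Fin.lastCases (fun x => ⌊x (Fin.last d)⌋₊) (fun ℓ x => col ℓ (dropLast x))

@[simp]
theorem liftedSets_castSucc [DecidableEq (EuclideanSpace ℝ (Fin (d + 1)))]
    (C : Fin (k + 1) → Finset (EuclideanSpace ℝ (Fin d))) (N : ℕ) (ℓ : Fin (k + 1)) :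
    liftedSets C N ℓ.castSucc = (C ℓ).image (appendZero d) := by
  simp only [liftedSets, Fin.lastCases_castSucc]
  congr
  exact Subsingleton.elim _ _

@[simp]
theorem liftedSets_last [DecidableEq (EuclideanSpace ℝ (Fin (d + 1)))]
    (C : Fin (k + 1) → Finset (EuclideanSpace ℝ (Fin d))) (N : ℕ) :
    liftedSets C N (Fin.last (k + 1)) =
      (Finset.range N).image (lastAxisPoint d) := by
  simp only [liftedSets, Fin.lastCases_last]
  congr
  exact Subsingleton.elim _ _

@[simp]
theorem liftedColoring_castSucc (col : Fin (k + 1) → EuclideanSpace ℝ (Fin d) → ℕ)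
    (ℓ : Fin (k + 1)) (x : EuclideanSpace ℝ (Fin (d + 1))) :
    liftedColoring col ℓ.castSucc x = col ℓ (dropLast x) := by
  simp [liftedColoring]

@[simp]
theorem liftedColoring_last (col : Fin (k + 1) → EuclideanSpace ℝ (Fin d) → ℕ)
    (x : EuclideanSpace ℝ (Fin (d + 1))) :
    liftedColoring col (Fin.last (k + 1)) x = ⌊x (Fin.last d)⌋₊ := by
  simp [liftedColoring]

theorem card_liftedSets {C : Fin (k + 1) → Finset (EuclideanSpace ℝ (Fin d))}
    {r : Fin (k + 2) → ℕ} (hC : ∀ ℓ, (C ℓ).card = (r ℓ.castSucc - 1) * (d - k + 1) + 1)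
    (ℓ : Fin (k + 2)) :
    (liftedSets C ((r (Fin.last _) - 1) * (d - k + 1) + 1) ℓ).card =
      (r ℓ - 1) * (d + 1 - (k + 1) + 1) + 1 := by
  rw [Nat.add_sub_add_right]
  induction ℓ using Fin.lastCases with
  | last =>
    rw [liftedSets_last, Finset.card_image_of_injective _ (lastAxisPoint_injective d),
      Finset.card_range]
  | cast ℓ =>
    rw [liftedSets_castSucc, Finset.card_image_of_injective _ (appendZero_injective d), hC]

theorem card_filter_liftedColoring_le {C : Fin (k + 1) → Finset (EuclideanSpace ℝ (Fin d))}
    {col : Fin (k + 1) → EuclideanSpace ℝ (Fin d) → ℕ} {r : Fin (k + 2) → ℕ}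
    (hr : 2 ≤ r (Fin.last _))
    (hcol : ∀ ℓ i, ((C ℓ).filter (fun x => col ℓ x = i)).card ≤ r ℓ.castSucc - 1)
    (N : ℕ) (ℓ : Fin (k + 2)) (i : ℕ) :
    ((liftedSets C N ℓ).filter (fun x => liftedColoring col ℓ x = i)).card ≤ r ℓ - 1 := by
  induction ℓ using Fin.lastCases with
  | last =>
    have hsingleton : ((liftedSets C N (Fin.last _)).filter
        (fun x => liftedColoring col (Fin.last _) x = i)).card ≤ 1 := by
      refine Finset.card_le_one.2 ?_
      simp only [liftedSets_last, Finset.mem_filter, Finset.mem_image, liftedColoring_last]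
      rintro _ ⟨⟨m, -, rfl⟩, rfl⟩ _ ⟨⟨m', -, rfl⟩, hm⟩
      simp [Nat.floor_add_one] at hm
      rw [hm]
    omega
  | cast ℓ =>
    rw [liftedSets_castSucc, Finset.filter_image,
      Finset.card_image_of_injective _ (appendZero_injective d)]
    simpa using hcol ℓ i

theorem one_le_last_of_mem_convexHull {C : Fin (k + 1) → Finset (EuclideanSpace ℝ (Fin d))}
    {N : ℕ} {S : Finset (EuclideanSpace ℝ (Fin (d + 1)))}
    (hS : S ⊆ liftedSets C N (Fin.last _)) {y : EuclideanSpace ℝ (Fin (d + 1))}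
    (hy : y ∈ convexHull ℝ (S : Set _)) : 1 ≤ y (Fin.last d) := by
  refine convexHull_min (fun x hx => ?_)
    (convex_halfSpace_ge (EuclideanSpace.projₗ (Fin.last d)).isLinear 1) hy
  obtain ⟨m, -, rfl⟩ := Finset.mem_image.1 (liftedSets_last C N ▸ hS hx)
  simp

end Lift

/-- Reduction Lemma for the Tverberg–Vrećica setting: if the colored Tverberg–Vrećica
statement holds for `(d, k, r₀, …, r_k)` with `k ≥ 1`, then it holds for
`(d-1, k-1, r₀, …, r_{k-1})`. -/
theorem coloredTV_reduction (d k : ℕ) (hk : 1 ≤ k) (hkd : k ≤ d)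
    (r : Fin (k + 1) → ℕ) (hr : ∀ ℓ, 2 ≤ r ℓ)
    (h : ColoredTV d k r) :
    ColoredTV (d - 1) (k - 1) (fun ℓ => r (Fin.castLE (by omega) ℓ)) := by
  obtain ⟨k, rfl⟩ : ∃ k', k = k' + 1 := ⟨k - 1, by omega⟩
  obtain ⟨d, rfl⟩ : ∃ d', d = d' + 1 := ⟨d - 1, by omega⟩
  show ColoredTV d k (fun ℓ => r ℓ.castSucc)
  -- `ColoredTV` forms `Finset.biUnion` with this instance, not with `WithLp.instDecidableEq`
  let _ : ∀ n, DecidableEq (EuclideanSpace ℝ (Fin n)) := fun _ => Classical.decEq _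
  intro C col hcard hcol
  obtain ⟨F, P, -, hPrank, hF⟩ := h (liftedSets C _) (liftedColoring col)
    (card_liftedSets hcard) (card_filter_liftedColoring_le (hr _) hcol _)
  have hpart ℓ : IsColorfulPartition (liftedSets C _ ℓ) (liftedColoring col ℓ) (F ℓ) :=
    ⟨(hF ℓ).1, (hF ℓ).2.1, (hF ℓ).2.2.1⟩
  have hrange (ℓ : Fin (k + 1)) j : (F ℓ.castSucc j : Set _) ⊆ Set.range (appendZero d) := by
    refine (Finset.coe_subset.2 ((hpart ℓ.castSucc).subset j)).trans ?_
    simp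
  have hmeet ℓ j := AffineSubspace.comap_inter_convexHull_preimage_nonempty (hrange ℓ j)
    ((hF ℓ.castSucc).2.2.2 j)
  obtain ⟨x, hxP, -⟩ := hmeet 0 ⟨0, by have := hr (0 : Fin (k + 1)).castSucc; omega⟩
  obtain ⟨y, hyP, hy⟩ := (hF (Fin.last _)).2.2.2 ⟨0, by have := hr (Fin.last _); omega⟩
  have hfy : EuclideanSpace.projₗ (Fin.last d) y ≠ 0 :=
    (zero_lt_one.trans_le (one_le_last_of_mem_convexHull ((hpart _).subset _) hy)).ne'
  refine ⟨fun ℓ j => (F ℓ.castSucc j).preimage _ (appendZero_injective d).injOn,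
    P.comap (appendZero d).toAffineMap, ⟨x, hxP⟩, ?_, fun ℓ => ?_⟩
  · have := AffineSubspace.finrank_direction_comap_add_one (appendZero_injective d)
      (range_appendZero d) hxP hyP hfy
    omega
  · obtain ⟨hdisj, hcover, hcolorful⟩ :=
      (liftedSets_castSucc C _ ℓ ▸ hpart ℓ.castSucc).preimage (appendZero_injective d)
        (col := col ℓ) (fun x => by simp)
    exact ⟨hdisj, hcover, hcolorful, fun j => by simpa using hmeet ℓ j⟩
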